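/- Let G = (V,E) be a finite simple graph with |V| = N, and let (AC, P, R) be Bell data satisfying Requirements 1 and 2 in which every sign sequence occurring in P or R is the stabilizer sign sequence s^A of some independent set A ⊆ V. Take the ideal observables A_i = (X_i + Z_i)/√2, B_i = (X_i − Z_i)/√2 for i ∈ AC and A_i = X_i, B_i = Z_i for i ∉ AC, and let B = Σ_{(s,t)∈P}(B_s + B_t) + Σ_{u∈R} B_u with B_s = ∏_{i∈AC, s_i≠0}(A_i + s_i B_i) · ∏_{i∉AC} O_i(s_i), where O_i(0)=I, O_i(+1)=A_i, O_i(−1)=B_i. Then the graph state attains the maximal quantum value: ⟨ψ_G | B | ψ_G⟩ = 2√2·|P| + |R|. -/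

import Mathlib

/-!
With the ideal observables, `A_i ± B_i = √2 X_i` or `√2 Z_i` for `i ∈ AC`, so every Bell term
`B_s` is `√2 ^ k` times a product of Pauli operators on distinct qubits, where
`k = #{i ∈ AC | s_i ≠ 0}`. For `s = s^A` with `A` independent this product applies `X` on `A`
and `Z` on the vertices with an odd number of neighbours in `A`: it is the stabilizer
`∏_{a ∈ A} X_a ∏_{b ∼ a} Z_b` of `ψ_G`, because flipping the bits of `A` changes the parity of
`q(x)` by the number of set bits with an odd number of neighbours in `A`. Hence
`⟨ψ_G|B_s|ψ_G⟩ = √2 ^ k`, and Requirements 1 and 2 give `k = 1` for both members of a pair and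
`k = 0` on `R`.
-/

open scoped InnerProductSpace

noncomputable section

variable {V : Type} [Fintype V] [DecidableEq V]

/-- The Hilbert space of `|V|` qubits, `ℂ^({0,1}^V)`. -/
abbrev QState (V : Type) [Fintype V] [DecidableEq V] :=
  EuclideanSpace ℂ (V → Bool)

/-- The Pauli `Z` operator on qubit `v`. -/
def pauliZ (v : V) : QState V →ₗ[ℂ] QState V where
  toFun ψ := WithLp.toLp 2 (fun x => (if x v then -1 else 1) * ψ x)
  map_add' ψ φ := by
    ext x
    simp [mul_add]
  map_smul' c ψ := by
    ext x
    simp [mul_comm, mul_left_comm]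

/-- The Pauli `X` operator on qubit `v`. -/
def pauliX (v : V) : QState V →ₗ[ℂ] QState V where
  toFun ψ := WithLp.toLp 2 (fun x => ψ (Function.update x v (!x v)))
  map_add' ψ φ := by ext x; simp
  map_smul' c ψ := by ext x; simp

/-- The number `q(x)` of edges of `G` whose two endpoints both carry the
value `1` in the configuration `x`. -/
def edgeCount (G : SimpleGraph V) [DecidableRel G.Adj] (x : V → Bool) : ℕ :=
  (G.edgeFinset.filter fun e =>
    Sym2.lift ⟨fun a b => x a && x b, fun _ _ => Bool.and_comm _ _⟩ e = true).card

/-- The graph state `ψ_G`, with amplitudes `(−1)^{q(x)} / 2^{N/2}`. -/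
def graphState (G : SimpleGraph V) [DecidableRel G.Adj] : QState V :=
  WithLp.toLp 2 (fun x => (-1 : ℂ) ^ edgeCount G x / ((Real.sqrt 2 : ℝ) : ℂ) ^ Fintype.card V)

/-- The stabilizer sign sequence `s^A` of an independent set `A`. -/
def signSeq (G : SimpleGraph V) [DecidableRel G.Adj] (A : Finset V) (v : V) : ℤ :=
  if v ∈ A then 1 else if Odd (G.neighborFinset v ∩ A).card then -1 else 0

/-- The observable associated to the symbol `k`: `O_i(0) = I`, `O_i(+1) = A_i`,
`O_i(-1) = B_i`. -/
def obsV (Ao Bo : V → QState V →ₗ[ℂ] QState V) (i : V) (k : ℤ) :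
    QState V →ₗ[ℂ] QState V :=
  if k = 1 then Ao i else if k = -1 then Bo i else 1

/-- The Bell operator term
`B_s = ∏_{i∈AC, s_i≠0} (A_i + s_i B_i) · ∏_{i∉AC} O_i(s_i)`
(all factors commute, so the order of the products is irrelevant). -/
def bellTermV (Ao Bo : V → QState V →ₗ[ℂ] QState V) (AC : Finset V)
    (s : V → ℤ) : QState V →ₗ[ℂ] QState V :=
  ((Finset.univ.filter fun i : V => i ∈ AC ∧ s i ≠ 0).toList.map
      (fun i => Ao i + s i • Bo i)).prod *
  ((Finset.univ.filter fun i : V => i ∉ AC).toList.map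
      (fun i => obsV Ao Bo i (s i))).prod

/-- The ideal observable `A_i`: `(X_i + Z_i)/√2` for `i ∈ AC`, `X_i` otherwise. -/
def idealA (AC : Finset V) (i : V) : QState V →ₗ[ℂ] QState V :=
  if i ∈ AC then ((Real.sqrt 2 : ℝ) : ℂ)⁻¹ • (pauliX i + pauliZ i) else pauliX i

/-- The ideal observable `B_i`: `(X_i − Z_i)/√2` for `i ∈ AC`, `Z_i` otherwise. -/
def idealB (AC : Finset V) (i : V) : QState V →ₗ[ℂ] QState V :=
  if i ∈ AC then ((Real.sqrt 2 : ℝ) : ℂ)⁻¹ • (pauliX i - pauliZ i) else pauliZ i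

open Finset

lemma List.prod_map_smul {ι R M : Type*} [CommSemiring R] [Semiring M] [Algebra R M]
    (l : List ι) (c : R) (f : ι → M) :
    (l.map fun i => c • f i).prod = c ^ l.length • (l.map f).prod := by
  induction l with
  | nil => simp
  | cons a l ih => simp [ih, pow_succ, smul_smul]

lemma inner_list_sum_map_apply {ι 𝕜 E : Type*} [RCLike 𝕜] [NormedAddCommGroup E]
    [InnerProductSpace 𝕜 E] (ψ : E) (l : List ι) (f : ι → E →ₗ[𝕜] E) :
    ⟪ψ, (l.map f).sum ψ⟫_𝕜 = (l.map fun i => ⟪ψ, f i ψ⟫_𝕜).sum := by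
  induction l with
  | nil => simp
  | cons i l ih => simp [inner_add_right, ih]

def flipOn {α : Type*} [DecidableEq α] (S : Finset α) (x : α → Bool) : α → Bool :=
  fun v => if v ∈ S then !x v else x v

@[simp]
lemma flipOn_empty {α : Type*} [DecidableEq α] (x : α → Bool) : flipOn ∅ x = x := rfl

lemma flipOn_update {α : Type*} [DecidableEq α] {S : Finset α} {a : α} (ha : a ∉ S)
    (x : α → Bool) : flipOn S (Function.update x a (!x a)) = flipOn (insert a S) x := by
  funext v
  by_cases hva : v = a
  · subst hva; simp [flipOn, ha]
  · simp [flipOn, hva]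

@[simp]
lemma pauliX_apply (v : V) (ψ : QState V) (x : V → Bool) :
    pauliX v ψ x = ψ (Function.update x v (!x v)) := rfl

@[simp]
lemma pauliZ_apply (v : V) (ψ : QState V) (x : V → Bool) :
    pauliZ v ψ x = (if x v then -1 else 1) * ψ x := rfl

lemma list_prod_obsV_pauli_apply (σ : V → ℤ) {L : List V} (hL : L.Nodup) (ψ : QState V)
    (x : V → Bool) :
    (L.map fun i => obsV pauliX pauliZ i (σ i)).prod ψ x
      = (∏ v ∈ L.toFinset, if σ v = -1 ∧ x v then -1 else 1)
          * ψ (flipOn {v ∈ L.toFinset | σ v = 1} x) := by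
  induction L generalizing x with
  | nil => simp
  | cons a l ih =>
    obtain ⟨ha, hl⟩ := List.nodup_cons.mp hL
    have ha' : a ∉ l.toFinset := by simpa using ha
    simp only [List.map_cons, List.prod_cons, Module.End.mul_apply, List.toFinset_cons,
      prod_insert ha', filter_insert]
    by_cases h1 : σ a = 1
    · have hupd : ∀ v ∈ l.toFinset, (Function.update x a (!x a)) v = x v := fun v hv =>
        Function.update_of_ne (by rintro rfl; exact ha' hv) _ _
      rw [obsV, if_pos h1, pauliX_apply, ih hl, prod_congr rfl fun v hv => by rw [hupd v hv],
        flipOn_update (fun h => ha' (mem_filter.mp h).1)]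
      simp [h1]
    · by_cases h2 : σ a = -1
      · rw [obsV, if_neg h1, if_pos h2, pauliZ_apply, ih hl]
        simp [h2]
      · rw [obsV, if_neg h1, if_neg h2, Module.End.one_apply, ih hl]
        simp [h1, h2]

section GraphState

variable (G : SimpleGraph V) [DecidableRel G.Adj]

lemma edgeCount_eq_card_filter (x : V → Bool) :
    edgeCount G x = #{e ∈ G.edgeFinset | ∀ u ∈ e, x u} := by
  unfold edgeCount
  congr 1
  refine filter_congr fun e _ => ?_
  induction e with
  | _ a b => simp

lemma card_filter_mem_edgeFinset_eq (y : V → Bool) (v : V) :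
    #{e ∈ G.edgeFinset | v ∈ e ∧ ∀ u ∈ e, y u} = #{u ∈ G.neighborFinset v | y v ∧ y u} := by
  symm
  refine card_bij (fun u _ => s(v, u)) ?_ ?_ ?_
  · intro u hu
    simp only [mem_filter, SimpleGraph.mem_neighborFinset] at hu
    simp [hu.1, hu.2.1, hu.2.2]
  · intro u₁ _ u₂ _ h
    exact Sym2.congr_right.mp h
  · intro e he
    simp only [mem_filter, SimpleGraph.mem_edgeFinset] at he
    obtain ⟨u, rfl⟩ := Sym2.mem_iff_exists.mp he.2.1
    exact ⟨u, by simp_all, rfl⟩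

lemma edgeCount_update_add_edgeCount (x : V → Bool) (v : V) :
    edgeCount G (Function.update x v (!x v)) + edgeCount G x
      = 2 * #{e ∈ G.edgeFinset | v ∉ e ∧ ∀ u ∈ e, x u} + #{u ∈ G.neighborFinset v | x u} := by
  set x' := Function.update x v (!x v)
  have hsplit : ∀ y : V → Bool, edgeCount G y
      = #{e ∈ G.edgeFinset | v ∉ e ∧ ∀ u ∈ e, y u} + #{u ∈ G.neighborFinset v | y v ∧ y u} := by
    intro y
    rw [edgeCount_eq_card_filter, ← card_filter_mem_edgeFinset_eq, add_comm,
      ← card_filter_add_card_filter_not (fun e => v ∈ e), filter_filter, filter_filter]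
    simp only [and_comm]
  have hfar : #{e ∈ G.edgeFinset | v ∉ e ∧ ∀ u ∈ e, x' u}
      = #{e ∈ G.edgeFinset | v ∉ e ∧ ∀ u ∈ e, x u} := by
    refine congrArg card (filter_congr fun e _ => and_congr_right fun hv => ?_)
    exact forall₂_congr fun u hu => by
      rw [show x' u = x u from Function.update_of_ne (by rintro rfl; exact hv hu) _ _]
  have hnear : #{u ∈ G.neighborFinset v | x' v ∧ x' u} + #{u ∈ G.neighborFinset v | x v ∧ x u}
      = #{u ∈ G.neighborFinset v | x u} := by
    have hx' : ∀ u ∈ G.neighborFinset v, x' u = x u := fun u hu =>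
      Function.update_of_ne (G.ne_of_adj ((G.mem_neighborFinset v u).mp hu)).symm _ _
    rw [filter_congr fun u hu => by rw [hx' u hu], show x' v = !x v from Function.update_self ..]
    cases x v <;> simp
  rw [hsplit x', hsplit x, hfar]
  omega

lemma neg_one_pow_edgeCount_update (x : V → Bool) (v : V) :
    (-1 : ℂ) ^ edgeCount G (Function.update x v (!x v))
      = (-1) ^ edgeCount G x * (-1) ^ #{u ∈ G.neighborFinset v | x u} := by
  have h := congrArg ((-1 : ℂ) ^ ·) (edgeCount_update_add_edgeCount G x v)
  simp only [pow_add, pow_mul, neg_one_sq, one_pow, one_mul] at h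
  have hsq : ((-1 : ℂ) ^ edgeCount G x) * (-1) ^ edgeCount G x = 1 := by
    rw [← pow_add, ← two_mul, pow_mul, neg_one_sq, one_pow]
  linear_combination (-1 : ℂ) ^ edgeCount G x * h
    - (-1 : ℂ) ^ edgeCount G (Function.update x v (!x v)) * hsq

lemma neg_one_pow_edgeCount_flipOn {A : Finset V} (hA : G.IsIndepSet A) (x : V → Bool) :
    (-1 : ℂ) ^ edgeCount G (flipOn A x)
      = (-1) ^ edgeCount G x * ∏ a ∈ A, (-1) ^ #{u ∈ G.neighborFinset a | x u} := by
  induction A using Finset.induction_on generalizing x with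
  | empty => simp
  | @insert a A ha ih =>
    have hA' : G.IsIndepSet A := hA.mono (by simp)
    have hfar : ∀ b ∈ A, #{u ∈ G.neighborFinset b | Function.update x a (!x a) u}
        = #{u ∈ G.neighborFinset b | x u} := by
      intro b hb
      refine congrArg card (filter_congr fun u hu => ?_)
      rw [Function.update_of_ne]
      rintro rfl
      exact hA (by simp) (by simp [hb]) (by rintro rfl; exact ha hb)
        ((G.mem_neighborFinset b u).mp hu).symm
    rw [← flipOn_update ha, ih hA', neg_one_pow_edgeCount_update, prod_insert ha,
      prod_congr rfl fun b hb => by rw [hfar b hb]]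
    ring

lemma prod_neg_one_pow_card_neighborFinset (A : Finset V) (x : V → Bool) :
    ∏ a ∈ A, (-1 : ℂ) ^ #{u ∈ G.neighborFinset a | x u}
      = ∏ u, if x u ∧ Odd #(G.neighborFinset u ∩ A) then -1 else 1 := by
  calc ∏ a ∈ A, (-1 : ℂ) ^ #{u ∈ G.neighborFinset a | x u}
      = ∏ a ∈ A, ∏ u, if G.Adj a u ∧ x u then -1 else 1 := by
        refine prod_congr rfl fun a _ => ?_
        rw [prod_ite, prod_const_one, mul_one, prod_const]
        simp [SimpleGraph.neighborFinset_eq_filter, filter_filter]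
    _ = ∏ u, ∏ a ∈ A, if G.Adj a u ∧ x u then -1 else 1 := prod_comm
    _ = ∏ u, if x u ∧ Odd #(G.neighborFinset u ∩ A) then -1 else 1 := by
        refine prod_congr rfl fun u _ => ?_
        rw [prod_ite, prod_const_one, mul_one, prod_const]
        have hcard : #{a ∈ A | G.Adj a u} = #(G.neighborFinset u ∩ A) := by
          congr 1
          ext a
          simp [G.adj_comm, and_comm]
        cases x u
        · simp
        · simp [hcard, neg_one_pow_eq_ite, ← Nat.not_even_iff_odd]

end GraphState

section Stabilizer

variable (G : SimpleGraph V) [DecidableRel G.Adj]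

lemma graphState_apply (x : V → Bool) :
    graphState G x = (-1 : ℂ) ^ edgeCount G x / ((Real.sqrt 2 : ℝ) : ℂ) ^ Fintype.card V := rfl

lemma inner_graphState_self : ⟪graphState G, graphState G⟫_ℂ = 1 := by
  have hterm : ∀ x, (starRingEnd ℂ) (graphState G x) * graphState G x
      = ((2 : ℂ) ^ Fintype.card V)⁻¹ := by
    intro x
    rw [graphState_apply, map_div₀, map_pow, map_pow, map_neg, map_one, Complex.conj_ofReal,
      div_mul_div_comm, ← mul_pow, ← mul_pow, ← Complex.ofReal_mul,
      Real.mul_self_sqrt zero_le_two]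
    norm_num
  simp only [PiLp.inner_apply, RCLike.inner_apply, mul_comm (graphState G _), hterm,
    sum_const, card_univ, Fintype.card_fun, Fintype.card_bool, nsmul_eq_mul]
  push_cast
  exact mul_inv_cancel₀ (pow_ne_zero _ two_ne_zero)

variable {G}

lemma signSeq_eq_one_iff (A : Finset V) (v : V) : signSeq G A v = 1 ↔ v ∈ A := by
  unfold signSeq
  split_ifs <;> simp_all

lemma signSeq_eq_one_or_neg_one_of_ne_zero {A : Finset V} {v : V} (h : signSeq G A v ≠ 0) :
    signSeq G A v = 1 ∨ signSeq G A v = -1 := by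
  unfold signSeq at *
  split_ifs at * <;> simp_all

lemma signSeq_eq_neg_one_iff {A : Finset V} (hA : G.IsIndepSet A) (v : V) :
    signSeq G A v = -1 ↔ Odd #(G.neighborFinset v ∩ A) := by
  unfold signSeq
  by_cases hv : v ∈ A
  · have hempty : G.neighborFinset v ∩ A = ∅ := by
      refine eq_empty_of_forall_notMem fun w hw => ?_
      rw [mem_inter, SimpleGraph.mem_neighborFinset] at hw
      exact hA hv hw.2 (G.ne_of_adj hw.1) hw.1
    simp [hv, hempty]
  · split_ifs <;> simp_all

theorem list_prod_obsV_signSeq_graphState {A : Finset V} (hA : G.IsIndepSet A) {L : List V}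
    (hL : L.Nodup) (hsupp : ∀ v, signSeq G A v ≠ 0 → v ∈ L) :
    (L.map fun i => obsV pauliX pauliZ i (signSeq G A i)).prod (graphState G) = graphState G := by
  ext x
  have hflip : {v ∈ L.toFinset | signSeq G A v = 1} = A := by
    ext v
    simp only [mem_filter, List.mem_toFinset, signSeq_eq_one_iff, and_iff_right_iff_imp]
    exact fun hv => hsupp v (by simp [signSeq, hv])
  have hsign : (∏ v ∈ L.toFinset, if signSeq G A v = -1 ∧ x v then -1 else 1)
      = ∏ v, if x v ∧ Odd #(G.neighborFinset v ∩ A) then (-1 : ℂ) else 1 := by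
    rw [prod_subset (subset_univ _) fun v _ hv => ?_]
    · exact prod_congr rfl fun v _ => if_congr (by rw [signSeq_eq_neg_one_iff hA, and_comm]) rfl rfl
    · have : signSeq G A v = 0 := by_contra fun h => hv (List.mem_toFinset.mpr (hsupp v h))
      simp [this]
  have hsq : (∏ v, if x v ∧ Odd #(G.neighborFinset v ∩ A) then (-1 : ℂ) else 1)
      * ∏ v, (if x v ∧ Odd #(G.neighborFinset v ∩ A) then (-1 : ℂ) else 1) = 1 := by
    rw [← prod_mul_distrib]
    exact prod_eq_one fun v _ => by split_ifs <;> norm_num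
  rw [list_prod_obsV_pauli_apply _ hL, hflip, hsign, graphState_apply, graphState_apply,
    neg_one_pow_edgeCount_flipOn G hA, prod_neg_one_pow_card_neighborFinset, ← mul_div_assoc]
  congr 1
  linear_combination (-1 : ℂ) ^ edgeCount G x * hsq

end Stabilizer

lemma inv_sqrt_two_mul_two : ((Real.sqrt 2 : ℝ) : ℂ)⁻¹ * 2 = (Real.sqrt 2 : ℝ) := by
  rw [inv_mul_eq_iff_eq_mul₀ (by simp), ← Complex.ofReal_mul, Real.mul_self_sqrt zero_le_two]
  norm_num

lemma idealA_add_smul_idealB {AC : Finset V} {i : V} (hi : i ∈ AC) {k : ℤ}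
    (hk : k = 1 ∨ k = -1) :
    idealA AC i + k • idealB AC i = ((Real.sqrt 2 : ℝ) : ℂ) • obsV pauliX pauliZ i k := by
  rcases hk with rfl | rfl
  · simp only [idealA, idealB, obsV, if_pos hi, if_true, one_smul]
    linear_combination (norm := module) inv_sqrt_two_mul_two • pauliX i
  · simp only [idealA, idealB, obsV, if_pos hi, if_neg (by decide : (-1 : ℤ) ≠ 1), if_true,
      neg_smul, one_smul]
    linear_combination (norm := module) inv_sqrt_two_mul_two • pauliZ i

lemma obsV_idealA_idealB_of_notMem {AC : Finset V} {i : V} (hi : i ∉ AC) (k : ℤ) :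
    obsV (idealA AC) (idealB AC) i k = obsV pauliX pauliZ i k := by
  simp only [obsV, idealA, idealB, if_neg hi]

lemma bellTermV_ideal_eq_smul (AC : Finset V) {σ : V → ℤ}
    (hσ : ∀ i, σ i ≠ 0 → σ i = 1 ∨ σ i = -1) :
    bellTermV (idealA AC) (idealB AC) AC σ
      = ((Real.sqrt 2 : ℝ) : ℂ) ^ #{i | i ∈ AC ∧ σ i ≠ 0} •
          (((univ.filter fun i => i ∈ AC ∧ σ i ≠ 0).toList
            ++ (univ.filter fun i => i ∉ AC).toList).map
              fun i => obsV pauliX pauliZ i (σ i)).prod := by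
  have hnear : ∀ i ∈ (univ.filter fun i => i ∈ AC ∧ σ i ≠ 0).toList,
      idealA AC i + σ i • idealB AC i
        = ((Real.sqrt 2 : ℝ) : ℂ) • obsV pauliX pauliZ i (σ i) := by
    intro i hi
    simp only [mem_toList, mem_filter, mem_univ, true_and] at hi
    exact idealA_add_smul_idealB hi.1 (hσ i hi.2)
  have hfar : ∀ i ∈ (univ.filter fun i => i ∉ AC).toList,
      obsV (idealA AC) (idealB AC) i (σ i) = obsV pauliX pauliZ i (σ i) := by
    intro i hi
    simp only [mem_toList, mem_filter, mem_univ, true_and] at hi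
    exact obsV_idealA_idealB_of_notMem hi _
  rw [bellTermV, List.map_congr_left hnear, List.map_congr_left hfar, List.prod_map_smul,
    length_toList, smul_mul_assoc, List.map_append, List.prod_append]

theorem inner_bellTermV_signSeq_graphState {G : SimpleGraph V} [DecidableRel G.Adj]
    {AC A : Finset V} (hA : G.IsIndepSet A) :
    ⟪graphState G, bellTermV (idealA AC) (idealB AC) AC (signSeq G A) (graphState G)⟫_ℂ
      = ((Real.sqrt 2 : ℝ) : ℂ) ^ #{i | i ∈ AC ∧ signSeq G A i ≠ 0} := by
  rw [bellTermV_ideal_eq_smul AC fun _ => signSeq_eq_one_or_neg_one_of_ne_zero,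
    LinearMap.smul_apply, list_prod_obsV_signSeq_graphState hA ?nodup ?supp, inner_smul_right,
    inner_graphState_self, mul_one]
  case nodup =>
    refine (nodup_toList _).append (nodup_toList _) ?_
    simp +contextual [List.Disjoint]
  case supp =>
    intro v hv
    by_cases hvAC : v ∈ AC <;> simp [hvAC, hv]

lemma filter_mem_and_ne_zero_eq_singleton {AC : Finset V} {s : V → ℤ} {T : V} (hT : T ∈ AC)
    (hsT : s T ≠ 0) (hs : ∀ i ∈ AC, i ≠ T → s i = 0) :
    ({i | i ∈ AC ∧ s i ≠ 0} : Finset V) = {T} := by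
  ext i
  simp only [mem_filter, mem_univ, true_and, mem_singleton]
  exact ⟨fun ⟨hi, hsi⟩ => by_contra fun hiT => hsi (hs i hi hiT), by rintro rfl; exact ⟨hT, hsT⟩⟩

theorem inner_bellTermV_add_bellTermV_signSeq_graphState {G : SimpleGraph V}
    [DecidableRel G.Adj] {AC A₁ A₂ : Finset V} (hA₁ : G.IsIndepSet A₁) (hA₂ : G.IsIndepSet A₂)
    {T : V} (hT : T ∈ AC) (hT₁₂ : signSeq G A₁ T * signSeq G A₂ T = -1)
    (hAC : ∀ i ∈ AC, i ≠ T → signSeq G A₁ i = 0 ∧ signSeq G A₂ i = 0) :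
    ⟪graphState G, (bellTermV (idealA AC) (idealB AC) AC (signSeq G A₁)
      + bellTermV (idealA AC) (idealB AC) AC (signSeq G A₂)) (graphState G)⟫_ℂ
        = 2 * ((Real.sqrt 2 : ℝ) : ℂ) := by
  rw [LinearMap.add_apply, inner_add_right,
    inner_bellTermV_signSeq_graphState hA₁, inner_bellTermV_signSeq_graphState hA₂,
    filter_mem_and_ne_zero_eq_singleton hT (left_ne_zero_of_mul (by rw [hT₁₂]; norm_num))
      fun i hi hiT => (hAC i hi hiT).1,
    filter_mem_and_ne_zero_eq_singleton hT (right_ne_zero_of_mul (by rw [hT₁₂]; norm_num))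
      fun i hi hiT => (hAC i hi hiT).2]
  simp [two_mul]

theorem inner_bellTermV_signSeq_graphState_of_eq_zero {G : SimpleGraph V} [DecidableRel G.Adj]
    {AC A : Finset V} (hA : G.IsIndepSet A) (hAC : ∀ i ∈ AC, signSeq G A i = 0) :
    ⟪graphState G, bellTermV (idealA AC) (idealB AC) AC (signSeq G A) (graphState G)⟫_ℂ = 1 := by
  rw [inner_bellTermV_signSeq_graphState hA,
    filter_eq_empty_iff.mpr fun i _ hi => hi.2 (hAC i hi.1), card_empty, pow_zero]

theorem graphState_attains_quantum_bound
    (G : SimpleGraph V) [DecidableRel G.Adj]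
    (AC : Finset V)
    (P : List ((V → ℤ) × (V → ℤ))) (R : List (V → ℤ))
    -- every occurring sign sequence is the sign sequence of an independent set
    (hstabP : ∀ p ∈ P, (∃ A : Finset V, (∀ u ∈ A, ∀ w ∈ A, ¬ G.Adj u w) ∧
                          p.1 = signSeq G A) ∧
                       (∃ A : Finset V, (∀ u ∈ A, ∀ w ∈ A, ¬ G.Adj u w) ∧
                          p.2 = signSeq G A))
    (hstabR : ∀ u ∈ R, ∃ A : Finset V, (∀ x ∈ A, ∀ y ∈ A, ¬ G.Adj x y) ∧
                          u = signSeq G A)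
    -- Requirement 1
    (hreq1 : ∀ p ∈ P, ∃ T ∈ AC, p.1 T * p.2 T = -1 ∧
      ∀ i ∈ AC, i ≠ T → p.1 i = 0 ∧ p.2 i = 0)
    -- Requirement 2
    (hreq2 : ∀ u ∈ R, ∀ i ∈ AC, u i = 0) :
    ⟪graphState G,
      ((P.map (fun p => bellTermV (idealA AC) (idealB AC) AC p.1
                        + bellTermV (idealA AC) (idealB AC) AC p.2)).sum
        + (R.map (fun u => bellTermV (idealA AC) (idealB AC) AC u)).sum)
        (graphState G)⟫_ℂ
      = ((2 * Real.sqrt 2 * P.length + R.length : ℝ) : ℂ) := by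
  have hindep {A : Finset V} (hA : ∀ u ∈ A, ∀ w ∈ A, ¬ G.Adj u w) : G.IsIndepSet A :=
    fun u hu w hw _ => hA u hu w hw
  have hP : ∀ p ∈ P, ⟪graphState G, (bellTermV (idealA AC) (idealB AC) AC p.1
      + bellTermV (idealA AC) (idealB AC) AC p.2) (graphState G)⟫_ℂ
        = 2 * ((Real.sqrt 2 : ℝ) : ℂ) := by
    rintro ⟨s, t⟩ hp
    obtain ⟨⟨A₁, hA₁, rfl⟩, ⟨A₂, hA₂, rfl⟩⟩ := hstabP _ hp
    obtain ⟨T, hT, hst, hzero⟩ := hreq1 _ hp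
    exact inner_bellTermV_add_bellTermV_signSeq_graphState (hindep hA₁) (hindep hA₂) hT hst hzero
  have hR : ∀ u ∈ R,
      ⟪graphState G, bellTermV (idealA AC) (idealB AC) AC u (graphState G)⟫_ℂ = 1 := by
    intro u hu
    obtain ⟨A, hA, rfl⟩ := hstabR u hu
    exact inner_bellTermV_signSeq_graphState_of_eq_zero (hindep hA) (hreq2 _ hu)
  rw [LinearMap.add_apply, inner_add_right, inner_list_sum_map_apply, inner_list_sum_map_apply,
    List.map_congr_left hP, List.map_congr_left hR]
  simp only [List.map_const', List.sum_replicate, nsmul_eq_mul]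
  push_cast
  ring

end
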